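/- For M symmetric positive definite and A symmetric positive semidefinite, the matrix D = ((M + A)^{-1} M)^m M^{-1} is positive definite for every natural number m. -/

import Mathlib

/-!
With `C = (M + A)⁻¹ M`, one factor of `C` absorbs `M⁻¹`:
`C ^ (k + 1) M⁻¹ = ((M + A)⁻¹ M) ^ k (M + A)⁻¹`, an alternating product `(P Q) ^ k P` of the
positive definite matrices `P = (M + A)⁻¹` and `Q = M`. Such a product is positive definite:
for `k = 0, 1` it is `P` and the congruence `P Q Pᴴ`, and
`(P Q) ^ (k + 2) P = (P Q) ((P Q) ^ k P) (P Q)ᴴ` is a congruence by the invertible matrix `P Q`.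
-/

open Matrix

namespace Matrix.PosDef

variable {n K : Type*} [Fintype n] [DecidableEq n] [Field K] [PartialOrder K] [StarRing K]

theorem mul_pow_mul {P Q : Matrix n n K} (hP : P.PosDef) (hQ : Q.PosDef) (k : ℕ) :
    ((P * Q) ^ k * P).PosDef := by
  induction k using Nat.twoStepInduction with
  | zero => simpa using hP
  | one =>
    have hPQP : (P * Q) ^ 1 * P = P * Q * star P := by
      rw [pow_one, star_eq_conjTranspose, hP.isHermitian.eq]
    rw [hPQP]
    exact hP.isUnit.posDef_star_right_conjugate_iff.mpr hQ
  | more k ih _ =>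
    have hstar : star (P * Q) = Q * P := by
      rw [star_mul, star_eq_conjTranspose, star_eq_conjTranspose, hP.isHermitian.eq,
        hQ.isHermitian.eq]
    have hconj : (P * Q) ^ (k + 2) * P = P * Q * ((P * Q) ^ k * P) * star (P * Q) := by
      rw [hstar, pow_succ', pow_succ]
      simp only [mul_assoc]
    rw [hconj]
    exact (hP.isUnit.mul hQ.isUnit).posDef_star_right_conjugate_iff.mpr ih

end Matrix.PosDef

/-- For `M` SPD and `A` symmetric positive semidefinite,
`D = ((M + A)⁻¹ M)^m M⁻¹` is positive definite for every `m : ℕ`. -/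
theorem diffusion_matrix_posDef {n : ℕ} (M A : Matrix (Fin n) (Fin n) ℝ)
    (hM : M.PosDef) (hA : A.PosSemidef) (m : ℕ) :
    ((((M + A)⁻¹ * M) ^ m) * M⁻¹).PosDef := by
  have hMA : (M + A).PosDef := hM.add_posSemidef hA
  cases m with
  | zero => simpa using hM.inv
  | succ k =>
    have hM_absorbed : ((M + A)⁻¹ * M) ^ (k + 1) * M⁻¹ = ((M + A)⁻¹ * M) ^ k * (M + A)⁻¹ := by
      rw [pow_succ, mul_assoc, mul_assoc, mul_nonsing_inv M ((isUnit_iff_isUnit_det M).mp hM.isUnit),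
        mul_one]
    rw [hM_absorbed]
    exact hMA.inv.mul_pow_mul hM k
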